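/- Let d ≥ 2 and let H be a d-uniform simple hypergraph such that any two distinct edges with nonempty intersection meet in exactly d − 1 vertices. Let x be a simplicial vertex of H, let S be an edge of H containing x, write N(S) = {z_1, …, z_t} with z_1, …, z_t pairwise distinct, and let S_1, …, S_t be edges of H with S_ℓ \ S = {z_ℓ} and x ∉ S_ℓ for each ℓ. Let H_2 be the induced subhypergraph of H on V(H) \ (S ∪ N(S)). If S' is a self disjoint set in H_2 consisting of m edges whose union has n vertices, then S' ∪ {S, S_1, …, S_t} is a self disjoint set in H consisting of m + t + 1 edges whose union has n + d + t vertices. -/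

import Mathlib

variable {V : Type*} [DecidableEq V] [Fintype V]

/-- The union of a family of edges. -/
def unionEdges (M : Finset (Finset V)) : Finset V := M.biUnion id

/-- `E` is the edge set of a simple hypergraph: every edge has at least two
vertices and no edge is contained in another distinct edge. -/
def IsSimpleHypergraph (E : Finset (Finset V)) : Prop :=
  (∀ S ∈ E, 2 ≤ S.card) ∧ ∀ S ∈ E, ∀ T ∈ E, S ⊆ T → S = T

/-- A family `M` of edges of `E` is a semi-induced matching if no edge of `E`
outside `M` is contained in the union of the members of `M`. -/
def IsSemiInducedMatching (E M : Finset (Finset V)) : Prop :=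
  M ⊆ E ∧ ∀ S ∈ E, S ∉ M → ¬ S ⊆ unionEdges M

/-- An induced matching is a semi-induced matching whose edges are pairwise disjoint. -/
def IsInducedMatching (E M : Finset (Finset V)) : Prop :=
  IsSemiInducedMatching E M ∧ ∀ S ∈ M, ∀ T ∈ M, S ≠ T → Disjoint S T

/-- A self semi-induced matching is a semi-induced matching in which no member
is contained in the union of the other members. -/
def IsSelfSemiInducedMatching (E M : Finset (Finset V)) : Prop :=
  IsSemiInducedMatching E M ∧ ∀ S ∈ M, ¬ S ⊆ unionEdges (M.erase S)

/-- A self-contained semi-induced matching. -/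
def IsSelfContainedSemiInducedMatching (E M : Finset (Finset V)) : Prop :=
  M ⊆ E ∧
  (∀ S ∈ E, S ∉ M → ¬ S ⊆ unionEdges M ∨ ∃ T ∈ M, T ⊆ S ∪ unionEdges (M.erase T)) ∧
  ∀ S ∈ M, ¬ S ⊆ unionEdges (M.erase S)

/-- A self disjoint set of edges. -/
def IsSelfDisjointSet (E M : Finset (Finset V)) : Prop :=
  M ⊆ E ∧ (∀ S ∈ M, ¬ S ⊆ unionEdges (M.erase S)) ∧
  ∃ M₀ ⊆ M, IsInducedMatching E M₀ ∧
    ∀ S ∈ M, S ∉ M₀ → ∃ T ∈ M₀, (S \ T).card = 1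

/-- A self semi-disjoint set of edges. -/
def IsSelfSemiDisjointSet (E M : Finset (Finset V)) : Prop :=
  M ⊆ E ∧ (∀ S ∈ M, ¬ S ⊆ unionEdges (M.erase S)) ∧
  ∃ M₀ ⊆ M, IsSemiInducedMatching E M₀ ∧
    ∀ S ∈ M, S ∉ M₀ → ∃ T ∈ M₀, (S \ T).card = 1

/-- The closed neighborhood `N[x]` of a vertex. -/
def closedNbhd (E : Finset (Finset V)) (x : V) : Finset V :=
  insert x ((E.filter fun S => x ∈ S).biUnion id)

/-- A simplicial vertex of a `d`-uniform hypergraph: every `d`-subset of `N[x]`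
is an edge. -/
def IsSimplicialVertex (E : Finset (Finset V)) (d : ℕ) (x : V) : Prop :=
  ∀ T ⊆ closedNbhd E x, T.card = d → T ∈ E

/-- `N(S)`, the union of `T \ S` over all edges `T` meeting `S`. -/
def edgeNbhd (E : Finset (Finset V)) (S : Finset V) : Finset V :=
  (E.filter fun T => (T ∩ S).Nonempty).biUnion fun T => T \ S

/-!
Every edge of `H₂` avoids `S ∪ N(S)`, while `S` and the edges `S_ℓ ⊆ S ∪ {z_ℓ}` live inside it,
so the two families have disjoint unions and the vertex count is `n + |S| + |N(S)|`. Each new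
edge has a private vertex (`x` for `S`, `z_ℓ` for `S_ℓ`), which keeps the enlarged family
irredundant. The induced matching of `S'` is enlarged by `S`: an edge of `H` covered by `S` and
that matching lies, if it meets `S`, in `S ∪ N(S)`, hence in `S`, hence equals `S`; if it misses
`S`, it is an edge of `H₂`. Finally each `S_ℓ` differs from `S` in exactly one vertex.
-/

open Finset

section

variable {α : Type*} [DecidableEq α]

/-- The edge set of the induced subhypergraph `H_W`. -/
def inducedEdges (E : Finset (Finset α)) (W : Finset α) : Finset (Finset α) :=
  E.filter (· ⊆ W)

/-- Condition (i) of a self disjoint set. -/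
def IsIrredundant (M : Finset (Finset α)) : Prop :=
  ∀ S ∈ M, ¬ S ⊆ unionEdges (M.erase S)

variable {E M M₁ M₂ : Finset (Finset α)} {S T W N : Finset α} {f : α → Finset α}

theorem mem_unionEdges {v : α} : v ∈ unionEdges M ↔ ∃ T ∈ M, v ∈ T := by
  simp [unionEdges]

theorem subset_unionEdges (hT : T ∈ M) : T ⊆ unionEdges M :=
  subset_biUnion_of_mem id hT

theorem unionEdges_mono (h : M₁ ⊆ M₂) : unionEdges M₁ ⊆ unionEdges M₂ :=
  biUnion_subset_biUnion_of_subset_left id h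

theorem unionEdges_subset_iff : unionEdges M ⊆ W ↔ ∀ T ∈ M, T ⊆ W :=
  biUnion_subset

theorem unionEdges_union : unionEdges (M₁ ∪ M₂) = unionEdges M₁ ∪ unionEdges M₂ := by
  ext v
  simp only [mem_unionEdges, mem_union, or_and_right, exists_or]

theorem unionEdges_insert : unionEdges (insert S M) = S ∪ unionEdges M :=
  biUnion_insert

theorem disjoint_of_disjoint_unionEdges (hne : ∀ T ∈ M₂, T.Nonempty)
    (h : Disjoint (unionEdges M₁) (unionEdges M₂)) : Disjoint M₁ M₂ := by
  refine disjoint_left.2 fun T hT₁ hT₂ => ?_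
  obtain ⟨v, hv⟩ := hne T hT₂
  exact disjoint_left.1 h (subset_unionEdges hT₁ hv) (subset_unionEdges hT₂ hv)

theorem mem_inducedEdges : T ∈ inducedEdges E W ↔ T ∈ E ∧ T ⊆ W :=
  mem_filter

theorem disjoint_edgeNbhd : Disjoint S (edgeNbhd E S) := by
  refine disjoint_left.2 fun v hvS hvN => ?_
  obtain ⟨T, -, hv⟩ := mem_biUnion.1 hvN
  exact (mem_sdiff.1 hv).2 hvS

theorem subset_union_edgeNbhd (hT : T ∈ E) (hTS : (T ∩ S).Nonempty) :
    T ⊆ S ∪ edgeNbhd E S := by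
  intro v hv
  by_cases hvS : v ∈ S
  · exact mem_union_left _ hvS
  · exact mem_union_right _
      (mem_biUnion.2 ⟨T, mem_filter.2 ⟨hT, hTS⟩, mem_sdiff.2 ⟨hv, hvS⟩⟩)

theorem isIrredundant_of_forall_exists_private
    (h : ∀ T ∈ M, ∃ v ∈ T, ∀ T' ∈ M, v ∈ T' → T' = T) : IsIrredundant M := by
  intro T hT hsub
  obtain ⟨v, hvT, hpriv⟩ := h T hT
  obtain ⟨T', hT', hvT'⟩ := mem_unionEdges.1 (hsub hvT)
  exact ne_of_mem_erase hT' (hpriv T' (mem_of_mem_erase hT') hvT')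

theorem IsIrredundant.not_subset_erase_union (h₁ : IsIrredundant M₁)
    (hdisj : Disjoint (unionEdges M₁) (unionEdges M₂)) (hT : T ∈ M₁) :
    ¬ T ⊆ unionEdges ((M₁ ∪ M₂).erase T) := by
  intro hsub
  refine h₁ T hT fun v hv => ?_
  have hv₂ : v ∉ unionEdges M₂ := disjoint_left.1 hdisj (subset_unionEdges hT hv)
  have := hsub hv
  rw [erase_union_distrib, unionEdges_union] at this
  exact (mem_union.1 this).resolve_right fun h => hv₂ (unionEdges_mono (erase_subset T M₂) h)

theorem IsIrredundant.union (h₁ : IsIrredundant M₁) (h₂ : IsIrredundant M₂)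
    (hdisj : Disjoint (unionEdges M₁) (unionEdges M₂)) : IsIrredundant (M₁ ∪ M₂) := by
  intro T hT
  rcases mem_union.1 hT with hT | hT
  · exact h₁.not_subset_erase_union hdisj hT
  · rw [union_comm]
    exact h₂.not_subset_erase_union hdisj.symm hT

theorem IsInducedMatching.insert_of_disjoint (hE : ∀ S ∈ E, ∀ T ∈ E, S ⊆ T → S = T)
    (hS : S ∈ E) (hW : Disjoint W (S ∪ edgeNbhd E S))
    (hM : IsInducedMatching (inducedEdges E W) M) : IsInducedMatching E (insert S M) := by
  obtain ⟨⟨hME, hsemi⟩, hpair⟩ := hM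
  have hMW : ∀ T ∈ M, T ⊆ W := fun T hT => (mem_inducedEdges.1 (hME hT)).2
  have hUW : unionEdges M ⊆ W := unionEdges_subset_iff.2 hMW
  have hTS : ∀ T ∈ M, Disjoint T S := fun T hT =>
    disjoint_of_subset_left (hMW T hT) (disjoint_of_subset_right subset_union_left hW)
  refine ⟨⟨insert_subset hS fun T hT => (mem_inducedEdges.1 (hME hT)).1, ?_⟩, ?_⟩
  · intro T hT hTnot hsub
    rw [unionEdges_insert] at hsub
    by_cases hmeet : (T ∩ S).Nonempty
    · have hTS : T ⊆ S := fun v hv =>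
        (mem_union.1 (hsub hv)).resolve_right fun hvU =>
          disjoint_left.1 hW (hUW hvU) (subset_union_edgeNbhd hT hmeet hv)
      exact hTnot (hE T hT S hS hTS ▸ mem_insert_self S M)
    · have hTU : T ⊆ unionEdges M := fun v hv =>
        (mem_union.1 (hsub hv)).resolve_left fun hvS => hmeet ⟨v, mem_inter.2 ⟨hv, hvS⟩⟩
      exact hsemi T (mem_inducedEdges.2 ⟨hT, hTU.trans hUW⟩)
        (fun h => hTnot (mem_insert_of_mem h)) hTU
  · intro T₁ hT₁ T₂ hT₂ hne
    rcases mem_insert.1 hT₁ with rfl | hT₁M <;> rcases mem_insert.1 hT₂ with rfl | hT₂M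
    · exact absurd rfl hne
    · exact (hTS T₂ hT₂M).symm
    · exact hTS T₁ hT₁M
    · exact hpair T₁ hT₁M T₂ hT₂M hne

theorem IsSelfDisjointSet.union_of_disjoint (hE : ∀ S ∈ E, ∀ T ∈ E, S ⊆ T → S = T)
    (hS : S ∈ E) (hW : Disjoint W (S ∪ edgeNbhd E S))
    (hM : IsSelfDisjointSet (inducedEdges E W) M) {A : Finset (Finset α)} (hAE : A ⊆ E)
    (hSA : S ∈ A) (hAU : unionEdges A ⊆ S ∪ edgeNbhd E S) (hA : IsIrredundant A)
    (hAS : ∀ T ∈ A, T ≠ S → #(T \ S) = 1) : IsSelfDisjointSet E (M ∪ A) := by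
  obtain ⟨hME, hMirr, M₀, hM₀M, hM₀, hM₀one⟩ := hM
  have hUW : unionEdges M ⊆ W :=
    unionEdges_subset_iff.2 fun T hT => (mem_inducedEdges.1 (hME hT)).2
  have hdisj : Disjoint (unionEdges M) (unionEdges A) :=
    disjoint_of_subset_left hUW (disjoint_of_subset_right hAU hW)
  refine ⟨union_subset (fun T hT => (mem_inducedEdges.1 (hME hT)).1) hAE,
    IsIrredundant.union hMirr hA hdisj, insert S M₀,
    insert_subset (mem_union_right _ hSA) (hM₀M.trans subset_union_left),
    hM₀.insert_of_disjoint hE hS hW, fun T hT hTnot => ?_⟩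
  rcases mem_union.1 hT with hT | hT
  · obtain ⟨T₀, hT₀, h⟩ := hM₀one T hT fun h => hTnot (mem_insert_of_mem h)
    exact ⟨T₀, mem_insert_of_mem hT₀, h⟩
  · exact ⟨S, mem_insert_self S M₀, hAS T hT fun h => hTnot (h ▸ mem_insert_self S M₀)⟩

theorem mem_sdiff_of_sdiff_eq_singleton {z : α} (h : T \ S = {z}) : z ∈ T \ S :=
  h ▸ mem_singleton_self z

theorem eq_of_sdiff_eq_singleton {v z : α} (h : T \ S = {z}) (hv : v ∈ T) (hvS : v ∉ S) :
    v = z :=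
  mem_singleton.1 (h ▸ mem_sdiff.2 ⟨hv, hvS⟩)

theorem unionEdges_insert_image (hf : ∀ z ∈ N, f z \ S = {z}) :
    unionEdges (insert S (N.image f)) = S ∪ N := by
  rw [unionEdges_insert]
  refine le_antisymm (union_subset subset_union_left ?_) (union_subset_union_right ?_)
  · refine unionEdges_subset_iff.2 fun T hT v hv => ?_
    obtain ⟨z, hz, rfl⟩ := mem_image.1 hT
    by_cases hvS : v ∈ S
    · exact mem_union_left _ hvS
    · exact mem_union_right _ (eq_of_sdiff_eq_singleton (hf z hz) hv hvS ▸ hz)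
  · exact fun z hz => subset_unionEdges (mem_image_of_mem f hz)
      (mem_sdiff.1 (mem_sdiff_of_sdiff_eq_singleton (hf z hz))).1

theorem card_insert_image (hf : ∀ z ∈ N, f z \ S = {z}) :
    #(insert S (N.image f)) = #N + 1 := by
  have hSf : S ∉ N.image f := fun h => by
    obtain ⟨z, hz, hzS⟩ := mem_image.1 h
    simpa [hzS] using hf z hz
  have hinj : Set.InjOn f N := fun z₁ h₁ z₂ h₂ h =>
    singleton_injective ((hf z₁ h₁).symm.trans (h ▸ hf z₂ h₂))
  rw [card_insert_of_notMem hSf, card_image_of_injOn hinj]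

theorem isIrredundant_insert_image {x : α} (hx : x ∈ S) (hf : ∀ z ∈ N, f z \ S = {z})
    (hxf : ∀ z ∈ N, x ∉ f z) : IsIrredundant (insert S (N.image f)) := by
  refine isIrredundant_of_forall_exists_private fun T hT => ?_
  rcases mem_insert.1 hT with rfl | hT
  · refine ⟨x, hx, fun T' hT' hxT' => ?_⟩
    rcases mem_insert.1 hT' with rfl | hT'
    · rfl
    · obtain ⟨z, hz, rfl⟩ := mem_image.1 hT'
      exact absurd hxT' (hxf z hz)
  · obtain ⟨z, hz, rfl⟩ := mem_image.1 hT
    obtain ⟨hzf, hzS⟩ := mem_sdiff.1 (mem_sdiff_of_sdiff_eq_singleton (hf z hz))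
    refine ⟨z, hzf, fun T' hT' hzT' => ?_⟩
    rcases mem_insert.1 hT' with rfl | hT'
    · exact absurd hzT' hzS
    · obtain ⟨z', hz', rfl⟩ := mem_image.1 hT'
      rw [eq_of_sdiff_eq_singleton (hf z' hz') hzT' hzS]

end

theorem selfDisjointSet_extend_general
    (E : Finset (Finset V)) (d : ℕ)
    (hH : IsSimpleHypergraph E) (hUnif : ∀ S ∈ E, S.card = d)
    (x : V)
    (S : Finset V) (hS : S ∈ E) (hxS : x ∈ S)
    (SE : V → Finset V)
    (hSE : ∀ z ∈ edgeNbhd E S, SE z ∈ E ∧ SE z \ S = {z} ∧ x ∉ SE z)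
    (M' : Finset (Finset V)) (m n : ℕ)
    (hM' : IsSelfDisjointSet
      (E.filter fun T => T ⊆ Finset.univ \ (S ∪ edgeNbhd E S)) M')
    (hm : M'.card = m) (hn : (unionEdges M').card = n) :
    IsSelfDisjointSet E (M' ∪ insert S ((edgeNbhd E S).image SE)) ∧
    (M' ∪ insert S ((edgeNbhd E S).image SE)).card = m + (edgeNbhd E S).card + 1 ∧
    (unionEdges (M' ∪ insert S ((edgeNbhd E S).image SE))).card
      = n + d + (edgeNbhd E S).card := by
  set N := edgeNbhd E S
  set A := insert S (N.image SE)
  have hf : ∀ z ∈ N, SE z \ S = {z} := fun z hz => (hSE z hz).2.1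
  have hAE : A ⊆ E := insert_subset hS (image_subset_iff.2 fun z hz => (hSE z hz).1)
  have hW : Disjoint (univ \ (S ∪ N)) (S ∪ N) := sdiff_disjoint
  have hM'A : Disjoint (unionEdges M') (unionEdges A) := by
    rw [unionEdges_insert_image hf]
    exact disjoint_of_subset_left
      (unionEdges_subset_iff.2 fun T hT => (mem_inducedEdges.1 (hM'.1 hT)).2) hW
  have hAne : ∀ T ∈ A, T.Nonempty := fun T hT =>
    card_pos.1 (lt_of_lt_of_le two_pos (hH.1 T (hAE hT)))
  refine ⟨hM'.union_of_disjoint hH.2 hS hW hAE (mem_insert_self S _)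
    (unionEdges_insert_image hf).le (isIrredundant_insert_image hxS hf fun z hz => (hSE z hz).2.2)
    fun T hT hTS => ?_, ?_, ?_⟩
  · obtain ⟨z, hz, rfl⟩ := mem_image.1 ((mem_insert.1 hT).resolve_left hTS)
    rw [hf z hz, card_singleton]
  · rw [card_union_of_disjoint (disjoint_of_disjoint_unionEdges hAne hM'A), card_insert_image hf,
      hm, add_assoc]
  · rw [unionEdges_union, card_union_of_disjoint hM'A, unionEdges_insert_image hf,
      card_union_of_disjoint disjoint_edgeNbhd, hUnif S hS, hn, add_assoc]

/-- in a `d`-uniform simple hypergraph in which any two distinct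
meeting edges intersect in exactly `d - 1` vertices, let `x` be a simplicial
vertex, `S` an edge containing `x`, and for each `z ∈ N(S)` let `SE z` be an
edge with `SE z \ S = {z}` and `x ∉ SE z`.  Let `H₂` be the induced
subhypergraph on `V(H) \ (S ∪ N(S))`.  If `M'` is a self disjoint set in `H₂`
of `m` edges whose union has `n` vertices, then `M' ∪ {S} ∪ {SE z : z ∈ N(S)}`
is a self disjoint set in `H` of `m + t + 1` edges whose union has `n + d + t`
vertices, where `t = |N(S)|`. -/
theorem selfDisjointSet_extend
    (E : Finset (Finset V)) (d : ℕ) (hd : 2 ≤ d)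
    (hH : IsSimpleHypergraph E) (hUnif : ∀ S ∈ E, S.card = d)
    (hInt : ∀ S ∈ E, ∀ T ∈ E, S ≠ T → (S ∩ T).Nonempty → (S ∩ T).card = d - 1)
    (x : V) (hx : IsSimplicialVertex E d x)
    (S : Finset V) (hS : S ∈ E) (hxS : x ∈ S)
    (SE : V → Finset V)
    (hSE : ∀ z ∈ edgeNbhd E S, SE z ∈ E ∧ SE z \ S = {z} ∧ x ∉ SE z)
    (M' : Finset (Finset V)) (m n : ℕ)
    (hM' : IsSelfDisjointSet
      (E.filter fun T => T ⊆ Finset.univ \ (S ∪ edgeNbhd E S)) M')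
    (hm : M'.card = m) (hn : (unionEdges M').card = n) :
    IsSelfDisjointSet E (M' ∪ insert S ((edgeNbhd E S).image SE)) ∧
    (M' ∪ insert S ((edgeNbhd E S).image SE)).card = m + (edgeNbhd E S).card + 1 ∧
    (unionEdges (M' ∪ insert S ((edgeNbhd E S).image SE))).card
      = n + d + (edgeNbhd E S).card :=
  selfDisjointSet_extend_general E d hH hUnif x S hS hxS SE hSE M' m n hM' hm hn
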